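/- Let n ≥ 2, ω = exp(2πi/n), and let A, B ∈ Mₙ(ℂ) be such that A is normal, the operator norm of B on Euclidean ℂⁿ equals 1, and {(x,y,z) ∈ ℂ³ : det(x·A + y·B + z·AB − I) = 0} = {(x,y,z) ∈ ℂ³ : xⁿ + yⁿ + (−1)^{n−1} zⁿ = 1}. Let e₀,…,e_{n−1} and ζ₀,…,ζ_{n−1} be orthonormal bases of ℂⁿ with A e_j = ω^j e_j and B ζ_j = ω^j ζ_j for j = 0,…,n−1. Then |⟨e_r, ζ_j⟩| = 1/√n for all 0 ≤ r, j ≤ n−1; consequently the matrix C with entries C_{rj} = √n·⟨e_r, ζ_j⟩ is a complex Hadamard matrix (all entries unimodular and C Cᴴ = n·I). -/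

import Mathlib

open Matrix Complex

noncomputable section

/-!
Let `W = (⟪e r, ζ j⟫)`, a unitary matrix, and `D = diag(1, ω, …, ωⁿ⁻¹)`. In the basis `e` the
matrices `A`, `B` become `D` and `M = W D Wᴴ`.

Fix `r`. On the plane `z = -ω⁻ʳ y` the spectral surface becomes `xⁿ = 1`, so the determinant of the
pencil restricted to it is `±det D (xⁿ - 1)` whatever `y` is. Its `r`-th row is `(1 - x ωʳ) e_r`,
hence its `(r, r)` cofactor does not depend on `y` either: first for `x ≠ ω⁻ʳ`, then by continuity
at `x = ω⁻ʳ`, where the restricted pencil factors as `(1 - ω⁻ʳ D)(1 - y M)`. This gives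
`adj(1 - y M)ᵣᵣ = 1` for all `y`.

Diagonalising, `adj(1 - y M)ᵣᵣ = ∑ⱼ |Wᵣⱼ|² ∏_{i ≠ j} (1 - y ωⁱ)`. At `y = ω⁻ʲ` only the `j`-th term
survives, so `|Wᵣⱼ|² qⱼ = 1` with `qⱼ` independent of `r`; summing over the unit column `j` of `W`
gives `qⱼ = n`.
-/

open Polynomial Finset

theorem Polynomial.eq_X_pow_sub_one_of_isRoot {K : Type*} [Field K] {n : ℕ} {ω : K}
    (hω : IsPrimitiveRoot ω n) (hn : 0 < n) {p : K[X]} (hp : p.Monic) (hdeg : p.natDegree = n)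
    (h : ∀ x : K, x ^ n = 1 → p.IsRoot x) : p = X ^ n - 1 := by
  classical
  have hXn : (X ^ n - 1 : K[X]).Monic := by simpa using monic_X_pow_sub_C (1 : K) hn.ne'
  refine eq_of_degree_le_of_eval_finset_eq (nthRootsFinset n (1 : K)) ?_ ?_ ?_ fun x hx => ?_
  · rw [hω.card_nthRootsFinset, degree_eq_natDegree hp.ne_zero, hdeg]
  · rw [degree_eq_natDegree hp.ne_zero, hdeg, ← C_1, degree_X_pow_sub_C hn]
  · rw [hp.leadingCoeff, hXn.leadingCoeff]
  · rw [mem_nthRootsFinset hn] at hx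
    rw [(h x hx).eq_zero, eval_sub, eval_pow, eval_X, hx, eval_one, sub_self]

theorem eq_inv_card_of_forall_mul_eq_one {ι K : Type*} [Fintype ι] [Field K] {c : ι → ι → K}
    {q : ι → K} (hcol : ∀ j, ∑ i, c i j = 1) (h : ∀ i j, c i j * q j = 1) (i j : ι) :
    c i j = (Fintype.card ι : K)⁻¹ := by
  have hq : q j = Fintype.card ι := by
    calc q j = (∑ i, c i j) * q j := by rw [hcol j, one_mul]
      _ = Fintype.card ι := by simp [sum_mul, h]
  exact eq_inv_of_mul_eq_one_left (hq ▸ h i j)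

namespace Matrix

section CommRing

variable {ι R : Type*} [Fintype ι] [DecidableEq ι] [CommRing R]

theorem det_eq_mul_adjugate_apply_self_of_row_eq {A : Matrix ι ι R} {r : ι} {c : R}
    (h : A r = Pi.single r c) : A.det = c * A.adjugate r r := by
  rw [adjugate_apply, ← det_updateRow_smul, ← Pi.single_smul, smul_eq_mul, mul_one, ← h,
    updateRow_eq_self]

theorem adjugate_diagonal_mul_apply_self (v : ι → R) (A : Matrix ι ι R) (r : ι) :
    (diagonal v * A).adjugate r r = A.adjugate r r * ∏ i ∈ univ.erase r, v i := by
  rw [adjugate_mul_distrib, adjugate_diagonal, mul_diagonal]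

theorem adjugate_conj_of_mul_eq_one {U U' A : Matrix ι ι R} (hU : U * U' = 1)
    (hU' : U' * U = 1) : (U * A * U').adjugate = U * A.adjugate * U' := by
  have hadj : ∀ {P Q : Matrix ι ι R}, P * Q = 1 → P.adjugate = P.det • Q := fun {P Q} h => by
    rw [← Matrix.mul_one P.adjugate, ← h, ← Matrix.mul_assoc, adjugate_mul, smul_mul, one_mul]
  rw [adjugate_mul_distrib, adjugate_mul_distrib, hadj hU, hadj hU']
  simp only [smul_mul, Matrix.mul_smul, smul_smul, ← det_mul, hU, det_one, one_smul,
    Matrix.mul_assoc]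

theorem adjugate_unitary_conj_diagonal_apply_self [StarRing R] {U : Matrix ι ι R}
    (hU : U ∈ unitaryGroup ι R) (v : ι → R) (r : ι) :
    (U * diagonal v * Uᴴ).adjugate r r = ∑ j, U r j * star (U r j) * ∏ i ∈ univ.erase j, v i := by
  rw [← star_eq_conjTranspose, adjugate_conj_of_mul_eq_one (mem_unitaryGroup_iff.mp hU)
    (mem_unitaryGroup_iff'.mp hU), adjugate_diagonal, mul_apply]
  simp only [mul_diagonal, star_apply]
  exact sum_congr rfl fun j _ => by ring

end CommRing

theorem det_sub_smul_eq_of_forall_pow_eq_one {K : Type*} [Field K] {n : ℕ} {ω : K}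
    (hω : IsPrimitiveRoot ω n) (hn : 0 < n) {D Z : Matrix (Fin n) (Fin n) K} (hD : IsUnit D.det)
    (h : ∀ x : K, x ^ n = 1 → (Z - x • D).det = 0) (x : K) :
    (Z - x • D).det = (-D).det * (x ^ n - 1) := by
  have hdet : ∀ x : K, (Z - x • D).det = (-D).det * (D⁻¹ * Z).charpoly.eval x := fun x => by
    rw [eval_charpoly, ← det_mul, scalar_apply, ← smul_one_eq_diagonal, Matrix.mul_sub,
      Matrix.mul_smul, mul_one, neg_mul, mul_nonsing_inv_cancel_left _ _ hD, smul_neg,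
      sub_neg_eq_add, neg_add_eq_sub]
  have hD' : (-D).det ≠ 0 := by
    rw [det_neg]
    exact mul_ne_zero (by simp) hD.ne_zero
  rw [hdet, eq_X_pow_sub_one_of_isRoot hω hn (charpoly_monic _) (by simp) fun y hy => ?_]
  · simp
  · exact (mul_eq_zero.mp ((hdet y).symm.trans (h y hy))).resolve_left hD'

def pencil {ι R : Type*} [Fintype ι] [DecidableEq ι] [CommRing R] (A B : Matrix ι ι R)
    (x y z : R) : Matrix ι ι R :=
  x • A + y • B + z • (A * B) - 1

section EuclideanSpace

variable {ι 𝕜 : Type*} [Fintype ι] [RCLike 𝕜]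

def ofColumns (v : ι → EuclideanSpace 𝕜 ι) : Matrix ι ι 𝕜 :=
  of fun i k => v k i

theorem conjTranspose_ofColumns_mul_ofColumns_apply (u v : ι → EuclideanSpace 𝕜 ι) (a b : ι) :
    ((ofColumns u)ᴴ * ofColumns v) a b = inner 𝕜 (u a) (v b) := by
  simp [ofColumns, mul_apply, EuclideanSpace.inner_eq_star_dotProduct, dotProduct, mul_comm]

variable [DecidableEq ι]

theorem ofColumns_mem_unitaryGroup {v : ι → EuclideanSpace 𝕜 ι} (hv : Orthonormal 𝕜 v) :
    ofColumns v ∈ unitaryGroup ι 𝕜 := by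
  rw [mem_unitaryGroup_iff', star_eq_conjTranspose]
  ext a b
  rw [conjTranspose_ofColumns_mul_ofColumns_apply, orthonormal_iff_ite.mp hv, one_apply]

theorem eq_ofColumns_mul_diagonal_mul_conjTranspose {A : Matrix ι ι 𝕜}
    {v : ι → EuclideanSpace 𝕜 ι} (hv : Orthonormal 𝕜 v) {c : ι → 𝕜}
    (hAv : ∀ k, toEuclideanCLM (𝕜 := 𝕜) A (v k) = c k • v k) :
    A = ofColumns v * diagonal c * (ofColumns v)ᴴ := by
  have hAV : A * ofColumns v = ofColumns v * diagonal c := by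
    ext i k
    rw [mul_diagonal]
    simpa [ofColumns, mul_apply, mulVec, dotProduct, mul_comm] using
      congrArg (fun w => w i) (congrArg WithLp.ofLp (hAv k))
  rw [← hAV, Matrix.mul_assoc, ← star_eq_conjTranspose,
    mem_unitaryGroup_iff.mp (ofColumns_mem_unitaryGroup hv), mul_one]

theorem det_pencil_unitary_conj {U : Matrix ι ι 𝕜} (hU : U ∈ unitaryGroup ι 𝕜)
    (A B : Matrix ι ι 𝕜) (x y z : 𝕜) :
    (pencil (U * A * Uᴴ) (U * B * Uᴴ) x y z).det = (pencil A B x y z).det := by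
  rw [← star_eq_conjTranspose]
  have hUU' := mem_unitaryGroup_iff.mp hU
  have hU'U := mem_unitaryGroup_iff'.mp hU
  have hAB : U * A * star U * (U * B * star U) = U * (A * B) * star U := by
    simp only [Matrix.mul_assoc, ← Matrix.mul_assoc (star U) U, hU'U, Matrix.one_mul]
  rw [← det_conj_of_mul_eq_one (N := pencil A B x y z) hUU' hU'U, pencil, pencil, hAB]
  congr 1
  simp only [Matrix.mul_add, Matrix.add_mul, Matrix.mul_sub, Matrix.sub_mul, Matrix.mul_smul,
    Matrix.smul_mul, Matrix.mul_one, hUU']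

theorem det_pencil_eq_of_orthonormal_eigenvectors {A B : Matrix ι ι 𝕜}
    {e ζ : ι → EuclideanSpace 𝕜 ι} (he : Orthonormal 𝕜 e) (hζ : Orthonormal 𝕜 ζ) {c : ι → 𝕜}
    (heA : ∀ k, toEuclideanCLM (𝕜 := 𝕜) A (e k) = c k • e k)
    (hζB : ∀ k, toEuclideanCLM (𝕜 := 𝕜) B (ζ k) = c k • ζ k) (x y z : 𝕜) :
    (pencil (diagonal c) ((ofColumns e)ᴴ * ofColumns ζ * diagonal c *
      ((ofColumns e)ᴴ * ofColumns ζ)ᴴ) x y z).det = (pencil A B x y z).det := by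
  set W := (ofColumns e)ᴴ * ofColumns ζ
  have hU := ofColumns_mem_unitaryGroup he
  have hB : B = ofColumns e * (W * diagonal c * Wᴴ) * (ofColumns e)ᴴ := by
    have hUW : ofColumns e * W = ofColumns ζ := by
      rw [← Matrix.mul_assoc, ← star_eq_conjTranspose, mem_unitaryGroup_iff.mp hU, one_mul]
    rw [eq_ofColumns_mul_diagonal_mul_conjTranspose hζ hζB, ← hUW, conjTranspose_mul]
    simp only [Matrix.mul_assoc]
  rw [hB, eq_ofColumns_mul_diagonal_mul_conjTranspose he heA, det_pencil_unitary_conj hU]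

end EuclideanSpace

end Matrix

def powDiagonal {R : Type*} [Semiring R] (ω : R) (n : ℕ) : Matrix (Fin n) (Fin n) R :=
  diagonal fun i => ω ^ (i : ℕ)

theorem one_sub_smul_powDiagonal {R : Type*} [CommRing R] (ω c : R) (n : ℕ) :
    (1 - c • powDiagonal ω n : Matrix (Fin n) (Fin n) R) =
      diagonal fun i : Fin n => 1 - c * ω ^ (i : ℕ) := by
  rw [powDiagonal, ← diagonal_smul, ← diagonal_one, diagonal_sub]
  rfl

section PencilSlice

variable {n : ℕ} {ω : ℂ}

/-- This is `-pencil (powDiagonal ω n) M x y (-ω⁻ʳ y)`. -/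
def pencilSlice (ω : ℂ) (M : Matrix (Fin n) (Fin n) ℂ) (r : Fin n) (y x : ℂ) :
    Matrix (Fin n) (Fin n) ℂ :=
  1 - y • ((1 - (ω ^ (r : ℕ))⁻¹ • powDiagonal ω n) * M) - x • powDiagonal ω n

theorem det_pencilSlice (hω : IsPrimitiveRoot ω n) {M : Matrix (Fin n) (Fin n) ℂ}
    (hM : ∀ x y z : ℂ, x ^ n + y ^ n + (-1) ^ (n - 1) * z ^ n = 1 →
      (pencil (powDiagonal ω n) M x y z).det = 0)
    (r : Fin n) (y x : ℂ) :
    (pencilSlice ω M r y x).det = (-powDiagonal ω n).det * (x ^ n - 1) := by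
  have hn : 0 < n := r.pos
  set a := ω ^ (r : ℕ)
  have han : a ^ n = 1 := by rw [← pow_mul, mul_comm, pow_mul, hω.pow_eq_one, one_pow]
  refine det_sub_smul_eq_of_forall_pow_eq_one hω hn ?_ (fun x hx => ?_) x
  · simp [powDiagonal, det_diagonal, prod_ne_zero_iff, hω.ne_zero hn.ne']
  have hsign : (-1 : ℂ) ^ (n - 1) * (-1) ^ n = -1 := by
    rw [← pow_add, show n - 1 + n = 2 * (n - 1) + 1 by omega, pow_succ, pow_mul]
    simp
  have hz : (-(a⁻¹ * y)) ^ n = (-1) ^ n * y ^ n := by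
    rw [neg_eq_neg_one_mul, mul_pow, mul_pow, inv_pow, han, inv_one, one_mul]
  have h := hM x y (-(a⁻¹ * y)) (by rw [hx, hz, ← mul_assoc, hsign]; ring)
  have hmat : x • powDiagonal ω n - (1 - y • ((1 - a⁻¹ • powDiagonal ω n) * M)) =
      pencil (powDiagonal ω n) M x y (-(a⁻¹ * y)) := by
    rw [pencil, sub_mul, one_mul, smul_mul]
    module
  rw [← neg_sub, det_neg, hmat, h, mul_zero]

theorem pencilSlice_apply_self (hω : ω ≠ 0) (M : Matrix (Fin n) (Fin n) ℂ) (r : Fin n)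
    (y x : ℂ) : pencilSlice ω M r y x r = Pi.single r (1 - x * ω ^ (r : ℕ)) := by
  funext t
  rw [pencilSlice, one_sub_smul_powDiagonal]
  by_cases h : t = r
  · subst h
    simp [powDiagonal, hω]
  · simp [powDiagonal, h, Ne.symm h, hω]

theorem pencilSlice_inv (M : Matrix (Fin n) (Fin n) ℂ) (r : Fin n) (y : ℂ) :
    pencilSlice ω M r y (ω ^ (r : ℕ))⁻¹ =
      (1 - (ω ^ (r : ℕ))⁻¹ • powDiagonal ω n) * (1 - y • M) := by
  simp only [pencilSlice, mul_sub, sub_mul, mul_one, one_mul, smul_mul, Matrix.mul_smul]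
  module

theorem adjugate_one_sub_smul_apply_self (hω : IsPrimitiveRoot ω n)
    {M : Matrix (Fin n) (Fin n) ℂ}
    (hM : ∀ x y z : ℂ, x ^ n + y ^ n + (-1) ^ (n - 1) * z ^ n = 1 →
      (pencil (powDiagonal ω n) M x y z).det = 0)
    (r : Fin n) (y : ℂ) : (1 - y • M).adjugate r r = 1 := by
  have hω0 : ω ≠ 0 := hω.ne_zero r.pos.ne'
  set a := ω ^ (r : ℕ)
  have ha : a ≠ 0 := pow_ne_zero _ hω0
  have hoff : ∀ y x, x ≠ a⁻¹ →
      (pencilSlice ω M r y x).adjugate r r = (pencilSlice ω M r 0 x).adjugate r r := by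
    intro y x hx
    have hx' : 1 - x * a ≠ 0 := fun h =>
      hx (eq_inv_of_mul_eq_one_left (by linear_combination -h))
    apply mul_left_cancel₀ hx'
    rw [← det_eq_mul_adjugate_apply_self_of_row_eq (pencilSlice_apply_self hω0 M r y x),
      ← det_eq_mul_adjugate_apply_self_of_row_eq (pencilSlice_apply_self hω0 M r 0 x),
      det_pencilSlice hω hM, det_pencilSlice hω hM]
  have hcont : ∀ y, Continuous fun x => (pencilSlice ω M r y x).adjugate r r := by
    intro y
    unfold pencilSlice
    fun_prop
  have hat : (pencilSlice ω M r y a⁻¹).adjugate r r = (pencilSlice ω M r 0 a⁻¹).adjugate r r :=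
    congrFun (Continuous.ext_on (dense_compl_singleton a⁻¹) (hcont y) (hcont 0) (hoff y)) a⁻¹
  have hprod : ∏ i ∈ univ.erase r, (1 - a⁻¹ * ω ^ (i : ℕ)) ≠ 0 := by
    refine prod_ne_zero_iff.mpr fun i hi h => ne_of_mem_erase hi (Fin.ext ?_)
    exact hω.pow_inj i.isLt r.isLt ((inv_mul_eq_one₀ ha).mp (sub_eq_zero.mp h).symm).symm
  rw [pencilSlice_inv, pencilSlice_inv, one_sub_smul_powDiagonal,
    adjugate_diagonal_mul_apply_self, adjugate_diagonal_mul_apply_self, zero_smul, sub_zero,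
    adjugate_one, one_apply_eq] at hat
  exact mul_right_cancel₀ hprod hat

end PencilSlice

theorem norm_apply_eq_one_div_sqrt_of_det_pencil_eq_zero {n : ℕ} {ω : ℂ}
    (hω : IsPrimitiveRoot ω n) {W : Matrix (Fin n) (Fin n) ℂ} (hW : W ∈ unitaryGroup (Fin n) ℂ)
    (hM : ∀ x y z : ℂ, x ^ n + y ^ n + (-1) ^ (n - 1) * z ^ n = 1 →
      (pencil (powDiagonal ω n) (W * powDiagonal ω n * Wᴴ) x y z).det = 0)
    (r j : Fin n) : ‖W r j‖ = 1 / √(n : ℝ) := by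
  have hω0 : ω ≠ 0 := hω.ne_zero r.pos.ne'
  have hsq : W r j * star (W r j) = (n : ℂ)⁻¹ := by
    refine (eq_inv_card_of_forall_mul_eq_one (c := fun r j => W r j * star (W r j))
      (q := fun j => ∏ i ∈ univ.erase j, (1 - (ω ^ (j : ℕ))⁻¹ * ω ^ (i : ℕ)))
      (fun j => ?_) (fun r j => ?_) r j).trans (by rw [Fintype.card_fin])
    · simpa [mul_apply, mul_comm] using congrFun (congrFun (mem_unitaryGroup_iff'.mp hW) j) j
    have hconj : 1 - (ω ^ (j : ℕ))⁻¹ • (W * powDiagonal ω n * Wᴴ) =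
        W * (1 - (ω ^ (j : ℕ))⁻¹ • powDiagonal ω n) * Wᴴ := by
      rw [Matrix.mul_sub, Matrix.sub_mul, mul_one, Matrix.mul_smul, Matrix.smul_mul,
        ← star_eq_conjTranspose, mem_unitaryGroup_iff.mp hW]
    have h := adjugate_one_sub_smul_apply_self hω hM r (ω ^ (j : ℕ))⁻¹
    rw [hconj, one_sub_smul_powDiagonal, adjugate_unitary_conj_diagonal_apply_self hW,
      sum_eq_single j] at h
    · exact h
    · intro k _ hk
      exact mul_eq_zero_of_right _ (prod_eq_zero (mem_erase.mpr ⟨Ne.symm hk, mem_univ j⟩)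
        (by simp [hω0]))
    · simp
  rw [Complex.star_def, mul_conj', ← ofReal_natCast, ← ofReal_inv, ← ofReal_pow] at hsq
  rw [← Real.sqrt_sq (norm_nonneg _), ofReal_injective hsq, Real.sqrt_inv, one_div]

def IsComplexHadamard {n : ℕ} (C : Matrix (Fin n) (Fin n) ℂ) : Prop :=
  (∀ r j, ‖C r j‖ = 1) ∧ C * Cᴴ = (n : ℂ) • 1

theorem isComplexHadamard_sqrt_smul {n : ℕ} {W : Matrix (Fin n) (Fin n) ℂ}
    (hW : W ∈ unitaryGroup (Fin n) ℂ) (h : ∀ r j, ‖W r j‖ = 1 / √(n : ℝ)) :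
    IsComplexHadamard ((√(n : ℝ) : ℂ) • W) := by
  refine ⟨fun r j => ?_, ?_⟩
  · have hn : (0 : ℝ) < n := Nat.cast_pos.mpr r.pos
    rw [Matrix.smul_apply, smul_eq_mul, norm_mul, h, norm_real,
      Real.norm_of_nonneg (Real.sqrt_nonneg _)]
    field_simp
  · rw [conjTranspose_smul, smul_mul, Matrix.mul_smul, smul_smul, ← star_eq_conjTranspose,
      mem_unitaryGroup_iff.mp hW, Complex.star_def, conj_ofReal, ← ofReal_mul,
      Real.mul_self_sqrt n.cast_nonneg, ofReal_natCast]

theorem stmt_3_general (n : ℕ)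
    (ω : ℂ) (hω : ω = Complex.exp (2 * Real.pi * Complex.I / n))
    (A B : Matrix (Fin n) (Fin n) ℂ)
    (hspec : {p : ℂ × ℂ × ℂ |
        (p.1 • A + p.2.1 • B + p.2.2 • (A * B) - 1).det = 0} =
      {p : ℂ × ℂ × ℂ |
        p.1 ^ n + p.2.1 ^ n + (-1 : ℂ) ^ (n - 1) * p.2.2 ^ n = 1})
    (e ζ : Fin n → EuclideanSpace ℂ (Fin n))
    (he : Orthonormal ℂ e) (hζ : Orthonormal ℂ ζ)
    (heA : ∀ j : Fin n, Matrix.toEuclideanCLM (𝕜 := ℂ) A (e j) = ω ^ (j : ℕ) • e j)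
    (hζB : ∀ j : Fin n, Matrix.toEuclideanCLM (𝕜 := ℂ) B (ζ j) = ω ^ (j : ℕ) • ζ j)
    (C : Matrix (Fin n) (Fin n) ℂ)
    (hC : C = Matrix.of (fun r j : Fin n =>
      (Real.sqrt n : ℂ) * (inner ℂ (e r) (ζ j) : ℂ))) :
    (∀ r j : Fin n, ‖(inner ℂ (e r) (ζ j) : ℂ)‖ = 1 / Real.sqrt n) ∧
    (∀ r j : Fin n, ‖C r j‖ = 1) ∧
    C * Cᴴ = (n : ℂ) • (1 : Matrix (Fin n) (Fin n) ℂ) := by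
  set W := (ofColumns e)ᴴ * ofColumns ζ
  have hW : W ∈ unitaryGroup (Fin n) ℂ :=
    mul_mem (Unitary.star_mem (ofColumns_mem_unitaryGroup he)) (ofColumns_mem_unitaryGroup hζ)
  have hWe : ∀ r j, W r j = inner ℂ (e r) (ζ j) := conjTranspose_ofColumns_mul_ofColumns_apply e ζ
  have hM : ∀ x y z : ℂ, x ^ n + y ^ n + (-1) ^ (n - 1) * z ^ n = 1 →
      (pencil (powDiagonal ω n) (W * powDiagonal ω n * Wᴴ) x y z).det = 0 := fun x y z h => by
    rw [powDiagonal, det_pencil_eq_of_orthonormal_eigenvectors he hζ heA hζB]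
    exact (Set.ext_iff.mp hspec (x, y, z)).mpr h
  have habs : ∀ r j, ‖W r j‖ = 1 / √n := fun r j =>
    norm_apply_eq_one_div_sqrt_of_det_pencil_eq_zero
      (hω ▸ isPrimitiveRoot_exp n r.pos.ne') hW hM r j
  have hCW : C = (√n : ℂ) • W := by
    ext r j
    rw [hC, Matrix.smul_apply, hWe, smul_eq_mul, of_apply]
  exact ⟨fun r j => hWe r j ▸ habs r j, hCW ▸ isComplexHadamard_sqrt_smul hW habs⟩

theorem stmt_3 (n : ℕ) (hn : 2 ≤ n)
    (ω : ℂ) (hω : ω = Complex.exp (2 * Real.pi * Complex.I / n))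
    (A B : Matrix (Fin n) (Fin n) ℂ)
    (hA : A * Aᴴ = Aᴴ * A)
    (hB : ‖Matrix.toEuclideanCLM (𝕜 := ℂ) B‖ = 1)
    (hspec : {p : ℂ × ℂ × ℂ |
        (p.1 • A + p.2.1 • B + p.2.2 • (A * B) - 1).det = 0} =
      {p : ℂ × ℂ × ℂ |
        p.1 ^ n + p.2.1 ^ n + (-1 : ℂ) ^ (n - 1) * p.2.2 ^ n = 1})
    (e ζ : Fin n → EuclideanSpace ℂ (Fin n))
    (he : Orthonormal ℂ e) (hζ : Orthonormal ℂ ζ)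
    (heA : ∀ j : Fin n, Matrix.toEuclideanCLM (𝕜 := ℂ) A (e j) = ω ^ (j : ℕ) • e j)
    (hζB : ∀ j : Fin n, Matrix.toEuclideanCLM (𝕜 := ℂ) B (ζ j) = ω ^ (j : ℕ) • ζ j)
    (C : Matrix (Fin n) (Fin n) ℂ)
    (hC : C = Matrix.of (fun r j : Fin n =>
      (Real.sqrt n : ℂ) * (inner ℂ (e r) (ζ j) : ℂ))) :
    (∀ r j : Fin n, ‖(inner ℂ (e r) (ζ j) : ℂ)‖ = 1 / Real.sqrt n) ∧
    (∀ r j : Fin n, ‖C r j‖ = 1) ∧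
    C * Cᴴ = (n : ℂ) • (1 : Matrix (Fin n) (Fin n) ℂ) :=
  stmt_3_general n ω hω A B hspec e ζ he hζ heA hζB C hC
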